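/- arXiv:1307.0170 — 2 statements merged into one kernel-verified Lean document; each statement's English description precedes it below -/
import Mathlib

section
/- With the notation of the biased-versus-unbiased MSPE comparison ($\Gamma$ symmetric PSD, $v_k = \sum_\ell \pi_\ell^*(\beta_k - \beta_\ell^*)$, $w_k = \sum_\ell \pi_\ell(\beta_k - \beta_\ell)$, $\mathcal{B} = \sum_\ell \pi_\ell^*(\beta_\ell - \beta_\ell^*)$), one has the exact identity $\sum_k \pi_k v_k^T \Gamma v_k - \sum_k \pi_k w_k^T \Gamma w_k = u^T \Gamma u$, where $u = \sum_{\ell=1}^{K-1}(\pi_\ell^* - \pi_\ell)(\beta_K - \beta_\ell) + \mathcal{B}$. -/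
open scoped Matrix


section aux
variable {K q : ℕ} (Γ : Matrix (Fin q) (Fin q) ℝ)

lemma sum_dot_left (c : Fin (K + 1) → ℝ) (f : Fin (K + 1) → Fin q → ℝ)
    (e : Fin q → ℝ) :
    ∑ k, c k * ((f k) ⬝ᵥ e) = (fun i => ∑ k, c k * f k i) ⬝ᵥ e := by
  simp only [dotProduct, Finset.mul_sum, Finset.sum_mul]
  rw [Finset.sum_comm]
  exact Finset.sum_congr rfl fun i _ => Finset.sum_congr rfl fun k _ => by ring

lemma sum_dot_right (c : Fin (K + 1) → ℝ) (f : Fin (K + 1) → Fin q → ℝ)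
    (d : Fin q → ℝ) :
    ∑ k, c k * (d ⬝ᵥ Γ.mulVec (f k)) = d ⬝ᵥ Γ.mulVec (fun i => ∑ k, c k * f k i) := by
  simp only [dotProduct, Matrix.mulVec]
  simp only [Finset.mul_sum]
  rw [Finset.sum_comm]
  refine Finset.sum_congr rfl fun i _ => ?_
  rw [Finset.sum_comm]
  refine Finset.sum_congr rfl fun j _ => ?_
  exact Finset.sum_congr rfl fun k _ => by ring

end aux

/-- Exact identity: the excess asymptotic MSPE due to asymptotic bias is the single
quadratic form `uᵀ Γ u` with
`u = ∑_{ℓ<K} (π*ₗ - πₗ)(β_K - βₗ) + 𝓑`, `𝓑 = ∑ₗ π*ₗ(βₗ - β*ₗ)`.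
Groups are indexed by `Fin (K+1)` with `Fin.last K` playing the role of the `K`-th group. -/
theorem biased_mspe_identity (K q : ℕ) (Γ : Matrix (Fin q) (Fin q) ℝ)
    (hΓ : Γ.PosSemidef)
    (β βs : Fin (K + 1) → Fin q → ℝ) (w ws : Fin (K + 1) → ℝ)
    (hw : ∀ k, 0 ≤ w k) (hw1 : ∑ k, w k = 1)
    (hws : ∀ k, 0 ≤ ws k) (hws1 : ∑ k, ws k = 1) :
    (∑ k, w k * ((fun i => ∑ l, ws l * (β k i - βs l i)) ⬝ᵥ
          Γ.mulVec (fun i => ∑ l, ws l * (β k i - βs l i))))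
      - (∑ k, w k * ((fun i => ∑ l, w l * (β k i - β l i)) ⬝ᵥ
          Γ.mulVec (fun i => ∑ l, w l * (β k i - β l i))))
      = (fun i => (∑ l : Fin K, (ws l.castSucc - w l.castSucc) *
            (β (Fin.last K) i - β l.castSucc i))
          + ∑ l : Fin (K + 1), ws l * (β l i - βs l i)) ⬝ᵥ
        Γ.mulVec (fun i => (∑ l : Fin K, (ws l.castSucc - w l.castSucc) *
            (β (Fin.last K) i - β l.castSucc i))
          + ∑ l : Fin (K + 1), ws l * (β l i - βs l i)) := by
  set m : Fin q → ℝ := fun i => ∑ l, w l * β l i with hm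
  set ms : Fin q → ℝ := fun i => ∑ l, ws l * βs l i with hms
  set a : Fin (K + 1) → Fin q → ℝ := fun k i => β k i - m i with ha
  set d : Fin q → ℝ := fun i => m i - ms i with hd
  have hv : ∀ k, (fun i => ∑ l, ws l * (β k i - βs l i)) = a k + d := by
    intro k; funext i
    simp only [ha, hd, hm, hms, Pi.add_apply, mul_sub, Finset.sum_sub_distrib,
      ← Finset.sum_mul, hws1, one_mul]
    ring
  have hwv : ∀ k, (fun i => ∑ l, w l * (β k i - β l i)) = a k := by
    intro k; funext i
    simp only [ha, hm, mul_sub, Finset.sum_sub_distrib, ← Finset.sum_mul, hw1, one_mul]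
  have hu : (fun i => (∑ l : Fin K, (ws l.castSucc - w l.castSucc) *
            (β (Fin.last K) i - β l.castSucc i))
          + ∑ l : Fin (K + 1), ws l * (β l i - βs l i)) = d := by
    funext i
    simp only [hd, hm, hms]
    have h1 : ∑ l : Fin (K+1), w l * β l i
        = (∑ l : Fin K, w l.castSucc * β l.castSucc i) + w (Fin.last K) * β (Fin.last K) i :=
      Fin.sum_univ_castSucc _
    have h2 : ∑ l : Fin (K+1), ws l * β l i
        = (∑ l : Fin K, ws l.castSucc * β l.castSucc i) + ws (Fin.last K) * β (Fin.last K) i :=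
      Fin.sum_univ_castSucc _
    have h3 : (∑ l : Fin K, w l.castSucc) + w (Fin.last K) = 1 := by
      rw [← Fin.sum_univ_castSucc]; exact hw1
    have h4 : (∑ l : Fin K, ws l.castSucc) + ws (Fin.last K) = 1 := by
      rw [← Fin.sum_univ_castSucc]; exact hws1
    have key : (∑ l : Fin K, (ws l.castSucc - w l.castSucc) *
            (β (Fin.last K) i - β l.castSucc i))
        = ∑ l : Fin (K+1), (w l - ws l) * β l i := by
      have e1 : ∑ l : Fin K, (ws l.castSucc - w l.castSucc) *
            (β (Fin.last K) i - β l.castSucc i)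
          = ((∑ l : Fin K, ws l.castSucc) - (∑ l : Fin K, w l.castSucc)) * β (Fin.last K) i
            + ∑ l : Fin K, (w l.castSucc - ws l.castSucc) * β l.castSucc i := by
        rw [sub_mul, Finset.sum_mul, Finset.sum_mul, ← Finset.sum_sub_distrib,
          ← Finset.sum_add_distrib]
        exact Finset.sum_congr rfl fun l _ => by ring
      rw [e1, Fin.sum_univ_castSucc (f := fun l => (w l - ws l) * β l i)]
      have : (∑ l : Fin K, ws l.castSucc) - (∑ l : Fin K, w l.castSucc)
          = w (Fin.last K) - ws (Fin.last K) := by linarith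
      rw [this]; ring
    rw [key]
    simp only [mul_sub, sub_mul, Finset.sum_sub_distrib]
    ring
  rw [hu]
  calc (∑ k, w k * ((fun i => ∑ l, ws l * (β k i - βs l i)) ⬝ᵥ
          Γ.mulVec (fun i => ∑ l, ws l * (β k i - βs l i))))
      - (∑ k, w k * ((fun i => ∑ l, w l * (β k i - β l i)) ⬝ᵥ
          Γ.mulVec (fun i => ∑ l, w l * (β k i - β l i))))
      = ∑ k, w k * ((a k ⬝ᵥ Γ.mulVec d) + (d ⬝ᵥ Γ.mulVec (a k)) + d ⬝ᵥ Γ.mulVec d) := by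
        simp only [hv, hwv, ← Finset.sum_sub_distrib, ← mul_sub]
        refine Finset.sum_congr rfl fun k _ => ?_
        congr 1
        simp only [Matrix.mulVec_add, dotProduct_add, add_dotProduct]
        ring
    _ = d ⬝ᵥ Γ.mulVec d := by
        simp only [mul_add, Finset.sum_add_distrib]
        have hz : (fun i => ∑ k, w k * a k i) = (0 : Fin q → ℝ) := by
          funext i
          simp only [ha, mul_sub, Finset.sum_sub_distrib, ← Finset.sum_mul, hw1, one_mul,
            hm, Pi.zero_apply, sub_self]
        rw [sum_dot_left w a (Γ.mulVec d), sum_dot_right Γ w a d, hz]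
        simp [← Finset.sum_mul, hw1]
end

section
/- Under the mixture model $Y = \sum_{k=1}^K \delta_k(\langle \beta_k, X\rangle + \varepsilon_k)$ with $E(\varepsilon_k) = 0$, $\mathrm{Var}(\varepsilon_k) = \sigma_k^2$, $(\delta_k)$, $X$, $(\varepsilon_k)$ suitably independent, the mean squared prediction error of the best predictor decomposes as $E[(Y - E(Y\mid X))^2] = \sum_{k=1}^K \pi_k \sigma_k^2 + E\big[\sum_{k=1}^K p_k(X)\big(\sum_{\ell=1}^K p_\ell(X)\langle\beta_k - \beta_\ell, X\rangle\big)^2\big]$, where $p_k(X) = E(\delta_k\mid X)$ and $\pi_k = E(\delta_k)$. -/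
/-!
Write `pₖ = E[δₖ ∣ X]` and `bₖ = ⟨βₖ, X⟩`. Since `bₖ` is `σ(X)`-measurable and `εₖ` is centred and
independent of `(X, δ)`, `E[Y ∣ X] = ∑ₖ pₖ bₖ`. As `∑ₖ pₖ = 1`, on the event `δ = eₖ` the residual
`Y - E[Y ∣ X]` equals `cₖ + εₖ` with `cₖ = ∑ₗ pₗ (bₖ - bₗ)`, so its square is `∑ₖ δₖ (cₖ + εₖ)²`.
In the expectation of `δₖ (cₖ + εₖ)²` the cross term vanishes by independence, `E[δₖ εₖ²] = πₖ σₖ²`,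
and `E[δₖ cₖ²] = E[pₖ cₖ²]` because `cₖ` is `σ(X)`-measurable.
-/

open MeasureTheory ProbabilityTheory
open scoped Matrix

def IsOneHot {ι : Type*} [DecidableEq ι] (d : ι → ℝ) : Prop := ∃ k, d = Pi.single k 1

namespace IsOneHot

variable {ι : Type*} [DecidableEq ι] {d : ι → ℝ}

lemma abs_le_one (hd : IsOneHot d) (l : ι) : |d l| ≤ 1 := by
  obtain ⟨k, rfl⟩ := hd
  by_cases h : l = k <;> simp [h]

variable [Fintype ι]

lemma sum_eq_one (hd : IsOneHot d) : ∑ l, d l = 1 := by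
  obtain ⟨k, rfl⟩ := hd
  simp

/-- On the event `δ = eₖ` the residual of the best predictor is `∑ₗ pₗ (bₖ - bₗ) + εₖ`. -/
lemma sq_sum_mul_add_sub {p b e : ι → ℝ} (hd : IsOneHot d) (hp : ∑ l, p l = 1) :
    (∑ k, d k * (b k + e k) - ∑ k, p k * b k) ^ 2
      = ∑ k, d k * (∑ l, p l * (b k - b l) + e k) ^ 2 := by
  obtain ⟨k, rfl⟩ := hd
  simp only [Pi.single_apply, ite_mul, one_mul, zero_mul, Finset.sum_ite_eq', Finset.mem_univ,
    ↓reduceIte, mul_sub, Finset.sum_sub_distrib, ← Finset.sum_mul, hp]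
  ring

end IsOneHot

section

-- `mΩ` comes last so that it is the instance found for the ambient σ-algebra.
variable {Ω : Type*} {m m₁ m₂ mΩ : MeasurableSpace Ω} {μ : Measure Ω}

lemma MeasureTheory.MemLp.bdd_mul {p : ENNReal} {f g : Ω → ℝ} {C : ℝ} (hf : MemLp f p μ)
    (hg : AEStronglyMeasurable g μ) (hbdd : ∀ᵐ ω ∂μ, ‖g ω‖ ≤ C) : MemLp (fun ω => g ω * f ω) p μ :=
  hf.mul' (memLp_top_of_bound hg C hbdd)

lemma memLp_dotProduct {ι : Type*} [Fintype ι] {p : ENNReal} {X : Ω → ι → ℝ} (v : ι → ℝ)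
    (hX : ∀ i, MemLp (fun ω => X ω i) p μ) : MemLp (fun ω => v ⬝ᵥ X ω) p μ := by
  simpa [dotProduct] using memLp_finsetSum Finset.univ fun i _ => (hX i).const_mul (v i)

namespace ProbabilityTheory.Indep

variable {f g : Ω → ℝ}

lemma integral_fun_mul_eq_mul_integral (h : Indep m₁ m₂ μ) (hf₁ : Measurable[m₁] f)
    (hg₂ : Measurable[m₂] g) (hf : AEStronglyMeasurable f μ) (hg : AEStronglyMeasurable g μ) :
    ∫ ω, f ω * g ω ∂μ = (∫ ω, f ω ∂μ) * ∫ ω, g ω ∂μ :=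
  ((IndepFun_iff_Indep f g μ).2
    (indep_of_indep_of_le h hf₁.comap_le hg₂.comap_le)).integral_fun_mul_eq_mul_integral hf hg

lemma condExp_mul_eq_zero (h : Indep m₁ m₂ μ) (hm : m ≤ m₁) (hm₁ : m₁ ≤ mΩ)
    [SigmaFinite (μ.trim (hm.trans hm₁))] (hf : Measurable[m₁] f) (hg₂ : Measurable[m₂] g)
    (hg : AEStronglyMeasurable g μ) (hg0 : ∫ ω, g ω ∂μ = 0) :
    μ[fun ω => f ω * g ω | m] =ᵐ[μ] 0 := by
  by_cases hfg : Integrable (fun ω => f ω * g ω) μ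
  swap
  · rw [condExp_of_not_integrable hfg]
  refine (ae_eq_condExp_of_forall_setIntegral_eq (hm.trans hm₁) hfg
    (fun s _ _ => integrableOn_zero) (fun s hs _ => ?_) aestronglyMeasurable_zero).symm
  have hs₁ : MeasurableSet[m₁] s := hm s hs
  calc ∫ ω in s, (0 : Ω → ℝ) ω ∂μ = (∫ ω, s.indicator f ω ∂μ) * ∫ ω, g ω ∂μ := by simp [hg0]
    _ = ∫ ω, s.indicator f ω * g ω ∂μ :=
      (h.integral_fun_mul_eq_mul_integral (hf.indicator hs₁) hg₂
        ((hf.mono hm₁ le_rfl).indicator (hm₁ s hs₁)).aestronglyMeasurable hg).symm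
    _ = ∫ ω in s, f ω * g ω ∂μ := by
      rw [← integral_indicator (hm₁ s hs₁)]
      congr 1 with ω
      by_cases hω : ω ∈ s <;> simp [hω]

end ProbabilityTheory.Indep

lemma integral_mul_condExp {f g : Ω → ℝ} (hm : m ≤ mΩ) [SigmaFinite (μ.trim hm)]
    (hg : StronglyMeasurable[m] g) (hgf : Integrable (fun ω => g ω * f ω) μ) (hf : Integrable f μ) :
    ∫ ω, g ω * μ[f | m] ω ∂μ = ∫ ω, g ω * f ω ∂μ := by
  rw [← integral_condExp hm (f := fun ω => g ω * f ω)]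
  exact integral_congr_ae (condExp_mul_of_stronglyMeasurable_left hg hgf hf).symm

lemma integral_mul_sq_add_of_indep [IsFiniteMeasure μ] {d c e : Ω → ℝ} {C : ℝ}
    (h : Indep m₁ m₂ μ) (hm : m ≤ m₁) (hm₁ : m₁ ≤ mΩ)
    (hd : Measurable[m₁] d) (hd_bdd : ∀ᵐ ω ∂μ, ‖d ω‖ ≤ C)
    (hc : Measurable[m] c) (hc2 : MemLp c 2 μ)
    (he : Measurable[m₂] e) (he2 : MemLp e 2 μ) (he0 : ∫ ω, e ω ∂μ = 0) :
    ∫ ω, d ω * (c ω + e ω) ^ 2 ∂μ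
      = ∫ ω, μ[d | m] ω * c ω ^ 2 ∂μ + (∫ ω, d ω ∂μ) * ∫ ω, e ω ^ 2 ∂μ := by
  have hdμ : AEStronglyMeasurable d μ := (hd.mono hm₁ le_rfl).aestronglyMeasurable
  have hdc : MemLp (fun ω => d ω * c ω) 2 μ := hc2.bdd_mul hdμ hd_bdd
  have hdc2 : Integrable (fun ω => d ω * c ω ^ 2) μ := hc2.integrable_sq.bdd_mul hdμ hd_bdd
  have hdce : Integrable (fun ω => d ω * c ω * e ω) μ := hdc.integrable_mul he2
  have hde2 : Integrable (fun ω => d ω * e ω ^ 2) μ := he2.integrable_sq.bdd_mul hdμ hd_bdd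
  have h_signal : ∫ ω, d ω * c ω ^ 2 ∂μ = ∫ ω, μ[d | m] ω * c ω ^ 2 ∂μ := by
    have hc2m : StronglyMeasurable[m] fun ω => c ω ^ 2 := (hc.pow_const 2).stronglyMeasurable
    simp_rw [mul_comm _ (c _ ^ 2)]
    exact (integral_mul_condExp (hm.trans hm₁) hc2m (by simpa only [mul_comm] using hdc2)
      ((memLp_top_of_bound hdμ C hd_bdd).integrable le_top)).symm
  have h_cross : ∫ ω, d ω * c ω * e ω ∂μ = 0 := by
    rw [h.integral_fun_mul_eq_mul_integral (f := fun ω => d ω * c ω) (hd.mul (hc.mono hm le_rfl))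
      he hdc.1 he2.1, he0, mul_zero]
  have h_noise : ∫ ω, d ω * e ω ^ 2 ∂μ = (∫ ω, d ω ∂μ) * ∫ ω, e ω ^ 2 ∂μ :=
    h.integral_fun_mul_eq_mul_integral hd (he.pow_const 2) hdμ he2.integrable_sq.1
  calc ∫ ω, d ω * (c ω + e ω) ^ 2 ∂μ
      = ∫ ω, d ω * c ω ^ 2 + 2 * (d ω * c ω * e ω) + d ω * e ω ^ 2 ∂μ := by
        congr 1 with ω; ring
    _ = _ := by
      rw [integral_add (hdc2.fun_add (hdce.const_mul 2)) hde2,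
        integral_add hdc2 (hdce.const_mul 2),
        integral_const_mul, h_signal, h_cross, h_noise, mul_zero, add_zero]

section Mixture

variable [IsFiniteMeasure μ] {ι : Type*} [Fintype ι] [DecidableEq ι] {Δ : Ω → ι → ℝ}
  {b ε : ι → Ω → ℝ}

lemma ae_sum_condExp_eq_one_of_isOneHot (hm : m ≤ mΩ) (hΔ : ∀ k, Integrable (fun ω => Δ ω k) μ)
    (hΔ1 : ∀ᵐ ω ∂μ, IsOneHot (Δ ω)) :
    ∀ᵐ ω ∂μ, ∑ k, μ[fun ω => Δ ω k | m] ω = 1 := by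
  have h_sum : μ[fun ω => ∑ k, Δ ω k | m] =ᵐ[μ] fun ω => ∑ k, μ[fun ω => Δ ω k | m] ω := by
    simpa only [← Finset.sum_fn] using condExp_finsetSum (fun k _ => hΔ k) m
  have h_one : μ[fun ω => ∑ k, Δ ω k | m] =ᵐ[μ] μ[fun _ => (1 : ℝ) | m] :=
    condExp_congr_ae (hΔ1.mono fun _ hω => hω.sum_eq_one)
  rw [condExp_const hm] at h_one
  filter_upwards [h_sum, h_one] with ω h₁ h₂
  rw [← h₁, h₂]

lemma condExp_mixture (h : Indep m₁ m₂ μ) (hm : m ≤ m₁) (hm₁ : m₁ ≤ mΩ)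
    (hΔ : ∀ k, Measurable[m₁] fun ω => Δ ω k) (hΔ1 : ∀ᵐ ω ∂μ, IsOneHot (Δ ω))
    (hb : ∀ k, Measurable[m] (b k)) (hb1 : ∀ k, Integrable (b k) μ)
    (hε : ∀ k, Measurable[m₂] (ε k)) (hε1 : ∀ k, Integrable (ε k) μ)
    (hε0 : ∀ k, ∫ ω, ε k ω ∂μ = 0) :
    μ[fun ω => ∑ k, Δ ω k * (b k ω + ε k ω) | m]
      =ᵐ[μ] fun ω => ∑ k, μ[fun ω => Δ ω k | m] ω * b k ω := by
  have hΔμ k : AEStronglyMeasurable (fun ω => Δ ω k) μ :=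
    ((hΔ k).mono hm₁ le_rfl).aestronglyMeasurable
  have hΔ_bdd k : ∀ᵐ ω ∂μ, ‖Δ ω k‖ ≤ 1 := hΔ1.mono fun _ hω => hω.abs_le_one k
  have hΔ_int k : Integrable (fun ω => Δ ω k) μ :=
    (memLp_top_of_bound (hΔμ k) 1 (hΔ_bdd k)).integrable le_top
  have hbΔ k : Integrable (fun ω => b k ω * Δ ω k) μ := by
    simpa only [mul_comm] using (hb1 k).bdd_mul (hΔμ k) (hΔ_bdd k)
  have hΔε k : Integrable (fun ω => Δ ω k * ε k ω) μ := (hε1 k).bdd_mul (hΔμ k) (hΔ_bdd k)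
  have h_term k : μ[fun ω => Δ ω k * (b k ω + ε k ω) | m]
      =ᵐ[μ] fun ω => μ[fun ω => Δ ω k | m] ω * b k ω := by
    have h_signal : μ[fun ω => b k ω * Δ ω k | m]
        =ᵐ[μ] fun ω => b k ω * μ[fun ω => Δ ω k | m] ω :=
      condExp_mul_of_stronglyMeasurable_left (hb k).stronglyMeasurable (hbΔ k) (hΔ_int k)
    have h_noise := h.condExp_mul_eq_zero hm hm₁ (hΔ k) (hε k) (hε1 k).1 (hε0 k)
    rw [show (fun ω => Δ ω k * (b k ω + ε k ω))
        = (fun ω => b k ω * Δ ω k) + fun ω => Δ ω k * ε k ω by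
          ext ω; simp only [Pi.add_apply]; ring]
    filter_upwards [condExp_add (hbΔ k) (hΔε k) m, h_signal, h_noise] with ω h₁ h₂ h₃
    rw [h₁, Pi.add_apply, h₂, h₃, Pi.zero_apply, add_zero, mul_comm]
  have h_sum : μ[fun ω => ∑ k, Δ ω k * (b k ω + ε k ω) | m]
      =ᵐ[μ] fun ω => ∑ k, μ[fun ω => Δ ω k * (b k ω + ε k ω) | m] ω := by
    simpa only [← Finset.sum_fn] using
      condExp_finsetSum (fun k _ => ((hbΔ k).add (hΔε k)).congr (.of_forall fun ω => by
        simp only [Pi.add_apply]; ring)) m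
  filter_upwards [h_sum, ae_all_iff.2 h_term] with ω h₁ h₂
  rw [h₁]
  exact Finset.sum_congr rfl fun k _ => h₂ k

/-- `m`, `m₁`, `m₂` play the roles of `σ(X)`, `σ(X, δ)` and `σ(ε)`. -/
theorem integral_sq_sub_condExp_mixture (h : Indep m₁ m₂ μ) (hm : m ≤ m₁) (hm₁ : m₁ ≤ mΩ)
    (hΔ : ∀ k, Measurable[m₁] fun ω => Δ ω k) (hΔ1 : ∀ᵐ ω ∂μ, IsOneHot (Δ ω))
    (hb : ∀ k, Measurable[m] (b k)) (hb2 : ∀ k, MemLp (b k) 2 μ)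
    (hε : ∀ k, Measurable[m₂] (ε k)) (hε2 : ∀ k, MemLp (ε k) 2 μ)
    (hε0 : ∀ k, ∫ ω, ε k ω ∂μ = 0) :
    ∫ ω, (∑ k, Δ ω k * (b k ω + ε k ω) - μ[fun ω => ∑ k, Δ ω k * (b k ω + ε k ω) | m] ω) ^ 2 ∂μ
      = ∑ k, (∫ ω, Δ ω k ∂μ) * ∫ ω, ε k ω ^ 2 ∂μ
        + ∫ ω, ∑ k, μ[fun ω => Δ ω k | m] ω
            * (∑ l, μ[fun ω => Δ ω l | m] ω * (b k ω - b l ω)) ^ 2 ∂μ := by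
  set p : ι → Ω → ℝ := fun k => μ[fun ω => Δ ω k | m]
  set c : ι → Ω → ℝ := fun k ω => ∑ l, p l ω * (b k ω - b l ω)
  have hΔμ k : AEStronglyMeasurable (fun ω => Δ ω k) μ :=
    ((hΔ k).mono hm₁ le_rfl).aestronglyMeasurable
  have hΔ_bdd k : ∀ᵐ ω ∂μ, ‖Δ ω k‖ ≤ 1 := hΔ1.mono fun _ hω => hω.abs_le_one k
  have hp_bdd k : ∀ᵐ ω ∂μ, ‖p k ω‖ ≤ 1 := ae_bdd_abs_condExp_of_ae_bdd_abs (hΔ_bdd k)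
  have hc k : Measurable[m] (c k) :=
    Finset.measurable_fun_sum _ fun l _ =>
      stronglyMeasurable_condExp.measurable.mul ((hb k).sub (hb l))
  have hc2 k : MemLp (c k) 2 μ :=
    memLp_finsetSum _ fun l _ => ((hb2 k).sub (hb2 l)).bdd_mul integrable_condExp.1 (hp_bdd l)
  have h_resid : ∀ᵐ ω ∂μ,
      (∑ k, Δ ω k * (b k ω + ε k ω) - μ[fun ω => ∑ k, Δ ω k * (b k ω + ε k ω) | m] ω) ^ 2
        = ∑ k, Δ ω k * (c k ω + ε k ω) ^ 2 := by
    filter_upwards [condExp_mixture h hm hm₁ hΔ hΔ1 hb (fun k => (hb2 k).integrable one_le_two) hε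
      (fun k => (hε2 k).integrable one_le_two) hε0,
      ae_sum_condExp_eq_one_of_isOneHot (hm.trans hm₁)
        (fun k => (memLp_top_of_bound (hΔμ k) 1 (hΔ_bdd k)).integrable le_top) hΔ1, hΔ1]
      with ω hY hp hΔω
    rw [hY]
    exact hΔω.sq_sum_mul_add_sub hp
  calc _ = ∫ ω, ∑ k, Δ ω k * (c k ω + ε k ω) ^ 2 ∂μ := integral_congr_ae h_resid
    _ = ∑ k, ∫ ω, Δ ω k * (c k ω + ε k ω) ^ 2 ∂μ :=
      integral_finsetSum _ fun k _ =>
        ((hc2 k).add (hε2 k)).integrable_sq.bdd_mul (hΔμ k) (hΔ_bdd k)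
    _ = ∑ k, (∫ ω, p k ω * c k ω ^ 2 ∂μ + (∫ ω, Δ ω k ∂μ) * ∫ ω, ε k ω ^ 2 ∂μ) :=
      Finset.sum_congr rfl fun k _ => integral_mul_sq_add_of_indep h hm hm₁ (hΔ k) (hΔ_bdd k)
        (hc k) (hc2 k) (hε k) (hε2 k) (hε0 k)
    _ = _ := by
      rw [Finset.sum_add_distrib, add_comm, integral_finsetSum _ fun k _ =>
        (hc2 k).integrable_sq.bdd_mul integrable_condExp.1 (hp_bdd k)]

end Mixture

end

theorem best_predictor_mspe_decomposition_general {Ω : Type*} [MeasureSpace Ω]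
    [IsProbabilityMeasure (volume : Measure Ω)] (q K : ℕ)
    (β : Fin K → Fin q → ℝ) (σ2 : Fin K → ℝ)
    (Δ : Ω → Fin K → ℝ) (X : Ω → Fin q → ℝ) (ε : Fin K → Ω → ℝ) (Y : Ω → ℝ)
    (hΔmeas : Measurable Δ) (hX : Measurable X)
    (hind : ∀ᵐ ω, ∃ k, ∀ l, Δ ω l = if l = k then (1:ℝ) else 0)
    (hε0 : ∀ k, (∫ ω, ε k ω) = 0) (hεvar : ∀ k, (∫ ω, (ε k ω) ^ 2) = σ2 k)
    (hX2 : ∀ i, MemLp (fun ω => X ω i) 2 (volume : Measure Ω))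
    (hε2 : ∀ k, MemLp (ε k) 2 (volume : Measure Ω))
    (hindep : ProbabilityTheory.IndepFun
      (fun ω => (X ω, Δ ω)) (fun ω k => ε k ω) (volume : Measure Ω))
    (hYdef : ∀ ω, Y ω = ∑ k, Δ ω k * (β k ⬝ᵥ X ω + ε k ω)) :
    (∫ ω, (Y ω - ((volume : Measure Ω)[Y|MeasurableSpace.comap X inferInstance]) ω) ^ 2)
      = (∑ k, (∫ ω, Δ ω k) * σ2 k)
        + ∫ ω, ∑ k,
            ((volume : Measure Ω)[fun ω' => Δ ω' k|MeasurableSpace.comap X inferInstance]) ω *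
            (∑ l, ((volume : Measure Ω)[fun ω' => Δ ω' l|MeasurableSpace.comap X inferInstance]) ω *
              ((fun i => β k i - β l i) ⬝ᵥ X ω)) ^ 2 := by
  obtain rfl : Y = _ := funext hYdef
  have hXΔ : Measurable[MeasurableSpace.comap (fun ω => (X ω, Δ ω)) inferInstance]
      fun ω => (X ω, Δ ω) := comap_measurable _
  have hε : ∀ k, Measurable[MeasurableSpace.comap (fun ω k => ε k ω) inferInstance] (ε k) :=
    fun k => (measurable_pi_apply k).comp (comap_measurable fun ω k => ε k ω)
  have hΔ1 : ∀ᵐ ω, IsOneHot (Δ ω) :=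
    hind.mono fun ω ⟨k, hk⟩ => ⟨k, funext fun l => by rw [hk l, Pi.single_apply]⟩
  simp only [← hεvar, ← Pi.sub_def, sub_dotProduct]
  exact integral_sq_sub_condExp_mixture (b := fun k ω => β k ⬝ᵥ X ω)
    ((IndepFun_iff_Indep _ _ _).1 hindep) (measurable_fst.comp hXΔ).comap_le
    (hX.prodMk hΔmeas).comap_le (fun k => (measurable_pi_apply k).comp (measurable_snd.comp hXΔ))
    hΔ1 (fun k => (by fun_prop : Measurable (β k ⬝ᵥ ·)).comp (comap_measurable X))
    (fun k => memLp_dotProduct (β k) hX2) hε hε2 hε0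

/-- Decomposition of the mean squared prediction error of the best predictor in the
mixture model `Y = ∑ₖ δₖ(⟨βₖ, X⟩ + εₖ)`:
`E[(Y - E(Y∣X))²] = ∑ₖ πₖσₖ² + E[∑ₖ pₖ(X)(∑ₗ pₗ(X)⟨βₖ-βₗ, X⟩)²]`, where
`pₖ(X) = E(δₖ∣X)` and `πₖ = E(δₖ)`. -/
theorem best_predictor_mspe_decomposition {Ω : Type*} [MeasureSpace Ω]
    [IsProbabilityMeasure (volume : Measure Ω)] (q K : ℕ)
    (β : Fin K → Fin q → ℝ) (σ2 : Fin K → ℝ)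
    (Δ : Ω → Fin K → ℝ) (X : Ω → Fin q → ℝ) (ε : Fin K → Ω → ℝ) (Y : Ω → ℝ)
    (hΔmeas : Measurable Δ) (hX : Measurable X) (hεmeas : ∀ k, Measurable (ε k))
    (hind : ∀ᵐ ω, ∃ k, ∀ l, Δ ω l = if l = k then (1:ℝ) else 0)
    (hε0 : ∀ k, (∫ ω, ε k ω) = 0) (hεvar : ∀ k, (∫ ω, (ε k ω) ^ 2) = σ2 k)
    (hY2 : MemLp Y 2 (volume : Measure Ω))
    (hX2 : ∀ i, MemLp (fun ω => X ω i) 2 (volume : Measure Ω))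
    (hε2 : ∀ k, MemLp (ε k) 2 (volume : Measure Ω))
    (hindep : ProbabilityTheory.IndepFun
      (fun ω => (X ω, Δ ω)) (fun ω k => ε k ω) (volume : Measure Ω))
    (hiid : ProbabilityTheory.iIndepFun
      (fun k => ε k)
      (volume : Measure Ω))
    (hYdef : ∀ ω, Y ω = ∑ k, Δ ω k * (β k ⬝ᵥ X ω + ε k ω)) :
    (∫ ω, (Y ω - ((volume : Measure Ω)[Y|MeasurableSpace.comap X inferInstance]) ω) ^ 2)
      = (∑ k, (∫ ω, Δ ω k) * σ2 k)
        + ∫ ω, ∑ k,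
            ((volume : Measure Ω)[fun ω' => Δ ω' k|MeasurableSpace.comap X inferInstance]) ω *
            (∑ l, ((volume : Measure Ω)[fun ω' => Δ ω' l|MeasurableSpace.comap X inferInstance]) ω *
              ((fun i => β k i - β l i) ⬝ᵥ X ω)) ^ 2 :=
  best_predictor_mspe_decomposition_general q K β σ2 Δ X ε Y hΔmeas hX hind hε0 hεvar hX2 hε2 hindep
    hYdef
end
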